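/- For n ≥ 4, there is no palindromic reduced word of the reverse permutation in S_n; equivalently, every reduced word w with w = w^rev (the reversal of w) is a reduced word of a permutation of the form s_i s_{i+1} ··· s_{j-1} s_j s_{j-1} ··· s_{i+1} s_i for some i ≤ j, which is not the reverse permutation for n ≥ 4. -/

import Mathlib

/-- The adjacent transposition `s_a` (1-indexed letter `a`) acting on positions `Fin n`. -/
def adjT (n a : ℕ) : Equiv.Perm (Fin n) :=
  if h : 1 ≤ a ∧ a < n then Equiv.swap ⟨a - 1, by omega⟩ ⟨a, h.2⟩ else 1

/-- The permutation `s_{w_1} ∘ s_{w_2} ∘ ⋯ ∘ s_{w_m}` of a word, transpositions acting on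
positions composed from the left (`s_{w_1}` applied first to the identity). -/
def permOfWord (n : ℕ) (w : List ℕ) : Equiv.Perm (Fin n) :=
  (w.map (adjT n)).prod

/-- The set of inversions of a permutation. -/
def invSet {n : ℕ} (σ : Equiv.Perm (Fin n)) : Set (Fin n × Fin n) :=
  {p | p.1 < p.2 ∧ σ p.2 < σ p.1}

/-- The number of inversions. -/
noncomputable def invNum {n : ℕ} (σ : Equiv.Perm (Fin n)) : ℕ := (invSet σ).ncard

/-- `w` is a reduced word for `σ`: letters in `[n-1]`, the product of the corresponding
adjacent transpositions is `σ`, and the length is `inv σ`. -/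
def IsReducedWord (n : ℕ) (σ : Equiv.Perm (Fin n)) (w : List ℕ) : Prop :=
  (∀ a ∈ w, 1 ≤ a ∧ a < n) ∧ permOfWord n w = σ ∧ w.length = invNum σ

/-- `σ` avoids the pattern 132. -/
def Avoids132 {n : ℕ} (σ : Equiv.Perm (Fin n)) : Prop :=
  ¬ ∃ i1 i2 i3 : Fin n, i1 < i2 ∧ i2 < i3 ∧ σ i1 < σ i3 ∧ σ i3 < σ i2

/-- `σ` avoids the pattern 312. -/
def Avoids312 {n : ℕ} (σ : Equiv.Perm (Fin n)) : Prop :=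
  ¬ ∃ i1 i2 i3 : Fin n, i1 < i2 ∧ i2 < i3 ∧ σ i2 < σ i3 ∧ σ i3 < σ i1

/-- The Rothe diagram of `σ` (permutation matrix with 1s at `(σ i, i)`, 0-indexed):
cells strictly north of the 1 in their column and strictly west of the 1 in their row. -/
def rothe {n : ℕ} (σ : Equiv.Perm (Fin n)) : Set (Fin n × Fin n) :=
  {p | p.1 < σ p.2 ∧ p.2 < σ.symm p.1}

/-- Two cells are adjacent if they share an edge. -/
def adjCell {n : ℕ} (p q : Fin n × Fin n) : Prop :=
  (p.1 = q.1 ∧ ((p.2 : ℕ) + 1 = q.2 ∨ (q.2 : ℕ) + 1 = p.2)) ∨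
  (p.2 = q.2 ∧ ((p.1 : ℕ) + 1 = q.1 ∨ (q.1 : ℕ) + 1 = p.1))

/-- The connected component of the Rothe diagram containing the (0-indexed) cell `(0,0)`,
empty if `(0,0)` is not in the diagram. -/
def comp11 {n : ℕ} (σ : Equiv.Perm (Fin n)) : Set (Fin n × Fin n) :=
  {p | ∃ h0 : 0 < n,
    Relation.ReflTransGen (fun a b => a ∈ rothe σ ∧ b ∈ rothe σ ∧ adjCell a b)
      (⟨⟨0, h0⟩, ⟨0, h0⟩⟩) p ∧
    p ∈ rothe σ ∧ ((⟨⟨0, h0⟩, ⟨0, h0⟩⟩ : Fin n × Fin n)) ∈ rothe σ}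

/-- Edelman–Greene insertion of `x` into a single (strictly increasing) row:
returns the new row and the optional entry bumped into the next row. -/
def insRow (x : ℕ) : List ℕ → List ℕ × Option ℕ
  | [] => ([x], none)
  | z :: zs =>
    if z < x then
      let r := insRow x zs
      (z :: r.1, r.2)
    else if z = x then (z :: zs, some (z + 1))
    else (x :: zs, some z)

/-- Edelman–Greene insertion of `x` into a tableau (list of rows). -/
def insTab (x : ℕ) : List (List ℕ) → List (List ℕ)
  | [] => [[x]]
  | r :: rs =>
    let p := insRow x r
    match p.2 with
    | none => p.1 :: rs
    | some y => p.1 :: insTab y rs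

/-- The Edelman–Greene insertion tableau `P(w)`. -/
def Ptab (w : List ℕ) : List (List ℕ) := w.foldl (fun t x => insTab x t) []

/-- Add the label `k` to the recording tableau `q` at the unique new cell of shape `p`. -/
def recordCell (k : ℕ) : List (List ℕ) → List (List ℕ) → List (List ℕ)
  | _, [] => []
  | [], _ :: _ => [[k]]
  | q :: qs, p :: ps =>
    if q.length < p.length then (q ++ [k]) :: qs else q :: recordCell k qs ps

/-- The Edelman–Greene recording tableau `Q(w) = EG(w)`. -/
def Qtab (w : List ℕ) : List (List ℕ) :=
  (w.foldl (fun pq x =>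
      let P' := insTab x pq.1
      (P', recordCell (pq.2.flatten.length + 1) pq.2 P'))
    (([], []) : List (List ℕ) × List (List ℕ))).2

/-- A tableau is frozen if the cell in (0-indexed) row `i`, column `j` contains `i + j + 1`. -/
def Frozen (P : List (List ℕ)) : Prop :=
  ∀ i j, i < P.length → j < (P.getD i []).length → (P.getD i []).getD j 0 = i + j + 1

/-- All rows strictly increasing. -/
def RowStrict (P : List (List ℕ)) : Prop := ∀ r ∈ P, List.Pairwise (· < ·) r

/-- All columns strictly increasing. -/
def ColStrict (P : List (List ℕ)) : Prop :=
  ∀ i j, i + 1 < P.length → j < (P.getD (i + 1) []).length →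
    (P.getD i []).getD j 0 < (P.getD (i + 1) []).getD j 0

/-- Valid Young-diagram shape: nonempty rows of weakly decreasing lengths. -/
def TabShape (P : List (List ℕ)) : Prop :=
  (∀ r ∈ P, r ≠ []) ∧ ∀ i, i + 1 < P.length → (P.getD (i + 1) []).length ≤ (P.getD i []).length

/-- The reading word: rows left to right, from the bottom row up. -/
def readingWord (P : List (List ℕ)) : List ℕ := P.reverse.flatten

/-- A standard Young tableau: valid shape, strictly increasing rows and columns, and the
entries are `1, …, N` each exactly once. -/
def IsStandard (Q : List (List ℕ)) : Prop :=
  TabShape Q ∧ RowStrict Q ∧ ColStrict Q ∧ Q.flatten.Perm (List.range' 1 Q.flatten.length)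

/-- `Q` has the staircase shape `sc_n = (n-1, n-2, …, 1)`. -/
def StaircaseShape (n : ℕ) (Q : List (List ℕ)) : Prop :=
  Q.length = n - 1 ∧ ∀ i, i < n - 1 → (Q.getD i []).length = n - 1 - i

/-- A sorting network: a reduced word of the reverse permutation in `S_n`. -/
def IsSortingNetwork (n : ℕ) (w : List ℕ) : Prop :=
  IsReducedWord n Fin.revPerm w

/-- Every intermediate permutation of the word avoids 132. -/
def Avoiding132 (n : ℕ) (w : List ℕ) : Prop :=
  ∀ k, k ≤ w.length → Avoids132 (permOfWord n (w.take k))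

/-- Every intermediate permutation of the word avoids 312. -/
def Avoiding312 (n : ℕ) (w : List ℕ) : Prop :=
  ∀ k, k ≤ w.length → Avoids312 (permOfWord n (w.take k))

/-- `c` is the column word of `Q`: its `k`-th letter (1-indexed) is the (1-indexed) column
of the entry `k` in `Q`. -/
def IsColumnWord (Q : List (List ℕ)) (c : List ℕ) : Prop :=
  c.length = Q.flatten.length ∧
  ∀ k, k < c.length → ∃ i j, i < Q.length ∧ j < (Q.getD i []).length ∧
    (Q.getD i []).getD j 0 = k + 1 ∧ c.getD k 0 = j + 1

/-- All anti-diagonals of `Q` increase downwards: `Q_{i,j} > Q_{i-1,j+1}` (1-indexed). -/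
def AntiDiagDown (Q : List (List ℕ)) : Prop :=
  ∀ i j, i + 1 < Q.length → j < (Q.getD (i + 1) []).length → j + 1 < (Q.getD i []).length →
    (Q.getD i []).getD (j + 1) 0 < (Q.getD (i + 1) []).getD j 0

/-!
Peeling off the outer letters of a palindrome `a :: v ++ [a]` conjugates the permutation of `v`
by `s_a`, so the permutation of any palindromic word is the identity or a transposition (a
conjugate of its middle letter). A nonempty reduced word does not give the identity, and the
transposition of positions `p < q` is the hook `s_{p+1} ⋯ s_q ⋯ s_{p+1}`. For `n ≥ 4` the
reverse permutation moves at least three points, so it is neither.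
-/

open Equiv Finset

lemma Equiv.Perm.IsSwap.conj {α : Type*} [DecidableEq α] {f : Perm α} (hf : f.IsSwap)
    (g : Perm α) : (g * f * g⁻¹).IsSwap := by
  obtain ⟨x, y, hxy, rfl⟩ := hf
  exact ⟨g x, g y, g.injective.ne hxy, (swap_apply_apply g x y).symm⟩

lemma adjT_inv (n a : ℕ) : (adjT n a)⁻¹ = adjT n a := by
  unfold adjT
  split <;> simp

lemma adjT_eq_one_or_isSwap (n a : ℕ) : adjT n a = 1 ∨ (adjT n a).IsSwap := by
  unfold adjT
  split
  · exact Or.inr ⟨_, _, by simp [Fin.ext_iff]; omega, rfl⟩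
  · exact Or.inl rfl

lemma permOfWord_singleton (n a : ℕ) : permOfWord n [a] = adjT n a := by
  simp [permOfWord]

lemma permOfWord_cons_append_singleton (n a : ℕ) (w : List ℕ) :
    permOfWord n (a :: (w ++ [a])) = adjT n a * permOfWord n w * (adjT n a)⁻¹ := by
  simp [permOfWord, adjT_inv, mul_assoc]

lemma permOfWord_eq_one_or_isSwap {n : ℕ} {w : List ℕ} (hw : w.Palindrome) :
    permOfWord n w = 1 ∨ (permOfWord n w).IsSwap := by
  induction hw with
  | nil => exact Or.inl rfl
  | singleton a => rw [permOfWord_singleton]; exact adjT_eq_one_or_isSwap n a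
  | cons_concat a _ ih =>
    rw [permOfWord_cons_append_singleton]
    rcases ih with h | h
    · exact Or.inl (by rw [h, mul_one, mul_inv_cancel])
    · exact Or.inr (h.conj _)

lemma invNum_one (n : ℕ) : invNum (1 : Perm (Fin n)) = 0 := by
  have : invSet (1 : Perm (Fin n)) = ∅ := by
    ext p
    simp only [invSet, Perm.coe_one, id_eq, Set.mem_ofPred_eq, Set.mem_empty_iff_false,
      iff_false, not_and, not_lt]
    exact le_of_lt
  rw [invNum, this, Set.ncard_empty]

lemma permOfWord_ne_one {n : ℕ} {w : List ℕ} (hne : w ≠ [])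
    (hlen : w.length = invNum (permOfWord n w)) : permOfWord n w ≠ 1 := by
  intro h
  rw [h, invNum_one, List.length_eq_zero_iff] at hlen
  exact hne hlen

lemma permOfWord_hook {n : ℕ} (d p : ℕ) (h : p + d + 1 < n) :
    permOfWord n (List.range' (p + 1) (d + 1) ++ (List.range' (p + 1) d).reverse)
      = swap ⟨p, by omega⟩ ⟨p + d + 1, h⟩ := by
  induction d generalizing p with
  | zero =>
    simp [permOfWord, adjT, show p + 1 < n by omega]
  | succ d ih =>
    have hword : List.range' (p + 1) (d + 2) ++ (List.range' (p + 1) (d + 1)).reverse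
        = (p + 1) :: ((List.range' (p + 2) (d + 1) ++ (List.range' (p + 2) d).reverse)
            ++ [p + 1]) := by
      simp [List.range'_succ]
    have hadj : adjT n (p + 1) = swap ⟨p, by omega⟩ ⟨p + 1, by omega⟩ := by
      simp [adjT, show p + 1 < n by omega]
    rw [hword, permOfWord_cons_append_singleton, ih (p + 1) (by omega), hadj,
      ← swap_apply_apply, swap_apply_right, swap_apply_of_ne_of_ne]
    · congr 1; simp only [Fin.mk.injEq]; omega
    all_goals simp [Fin.ext_iff]; omega

lemma two_lt_card_support_revPerm {n : ℕ} (hn : 4 ≤ n) :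
    2 < #(Fin.revPerm : Perm (Fin n)).support := by
  rw [two_lt_card]
  refine ⟨⟨0, by omega⟩, ?_, ⟨1, by omega⟩, ?_, ⟨n - 1, by omega⟩, ?_, ?_⟩ <;>
    simp [Fin.ext_iff] <;> omega

/-- every nonempty palindromic reduced word is a reduced word of a
permutation of the form `s_i s_{i+1} ⋯ s_{j-1} s_j s_{j-1} ⋯ s_{i+1} s_i`; consequently,
for `n ≥ 4` there is no palindromic reduced word of the reverse permutation in `S_n`. -/
theorem no_palindromic_reduced_word (n : ℕ) :
    (∀ w : List ℕ, w ≠ [] → w.reverse = w → (∀ a ∈ w, 1 ≤ a ∧ a < n) →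
        w.length = invNum (permOfWord n w) →
        ∃ i j : ℕ, 1 ≤ i ∧ i ≤ j ∧ j ≤ n - 1 ∧
          permOfWord n w
            = permOfWord n (List.range' i (j - i + 1) ++ (List.range' i (j - i)).reverse)) ∧
    (4 ≤ n → ¬ ∃ w : List ℕ, IsReducedWord n Fin.revPerm w ∧ w.reverse = w) := by
  constructor
  · intro w hne hpal _ hlen
    obtain ⟨x, y, hxy, hσ⟩ := (permOfWord_eq_one_or_isSwap (.of_reverse_eq hpal)).resolve_left
      (permOfWord_ne_one hne hlen)
    obtain ⟨p, q, hpq, hσ⟩ : ∃ p q : Fin n, p < q ∧ permOfWord n w = swap p q := by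
      rcases hxy.lt_or_gt with h | h
      · exact ⟨x, y, h, hσ⟩
      · exact ⟨y, x, h, hσ.trans (swap_comm x y)⟩
    refine ⟨p + 1, q, by omega, by omega, by omega, ?_⟩
    have hd : (q : ℕ) - (p + 1) = q - p - 1 := by omega
    rw [hd, permOfWord_hook _ _ (by omega), hσ]
    congr
    simp only [Fin.ext_iff]; omega
  · rintro hn ⟨w, ⟨-, hσ, -⟩, hpal⟩
    have hcard := two_lt_card_support_revPerm hn
    rcases hσ ▸ permOfWord_eq_one_or_isSwap (n := n) (.of_reverse_eq hpal) with h | h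
    · simp [h] at hcard
    · rw [← Perm.card_support_eq_two.mpr h] at hcard
      exact lt_irrefl _ hcard
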